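/- Let G be a transcendental semigroup. Then F(G) does not contain Herman rings: there is no connected component U of F(G) together with an element g ∈ G satisfying g(U) ⊆ U such that U is contained in a Herman ring of g, i.e., in a periodic component V of F(g) of some period p on which g^p is conformally conjugate to an irrational rotation of an annulus. -/

import Mathlib

/-!
An entire function `g` has no Herman ring at all. If `ψ` maps a Herman ring `V` of `g`
conformally onto `{r < |w| < R}`, the argument principle for its inverse `σ` shows that some
curve `σ {|w| = τ}` encloses a point of `V` at which `|ψ| ≠ τ`; the maximum principle for `ψ`
and `1/ψ` then forces the bounded complementary component `W` of that curve to leave `V`, so `W`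
meets `∂V ⊆ J(g)`. On the other hand `g^p` is a rotation on `∂W ⊆ V`, so the maximum principle
makes the iterates of `g` a normal family on `W`, i.e. `W ⊆ F(g)`.
-/

open Set Filter Topology

noncomputable section

/-- A transcendental entire function: entire (differentiable on all of `ℂ`)
and not a polynomial. -/
def TranscendentalEntire (f : ℂ → ℂ) : Prop :=
  Differentiable ℂ f ∧ ¬ ∃ p : Polynomial ℂ, ∀ z, f z = p.eval z

/-- A family `𝓕` of entire functions is normal on a set `U`: every sequence in `𝓕`
has a subsequence which either converges locally uniformly on `U` (to a holomorphic
limit), or diverges locally uniformly to `∞` on `U` (i.e. converges to the constant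
`∞` locally uniformly with respect to the spherical metric). -/
def NormalOn (F : Set (ℂ → ℂ)) (U : Set ℂ) : Prop :=
  ∀ s : ℕ → ℂ → ℂ, (∀ n, s n ∈ F) →
    ∃ φ : ℕ → ℕ, StrictMono φ ∧
      ((∃ h : ℂ → ℂ, TendstoLocallyUniformlyOn (fun n => s (φ n)) h atTop U) ∨
        (∀ K, K ⊆ U → IsCompact K → ∀ M : ℝ,
          ∀ᶠ n in atTop, ∀ z ∈ K, M ≤ ‖s (φ n) z‖))

/-- The Fatou set of a family of entire functions: the largest open subset of `ℂ`
on which the family is normal. -/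
def fatou (F : Set (ℂ → ℂ)) : Set ℂ :=
  {z | ∃ U : Set ℂ, IsOpen U ∧ z ∈ U ∧ NormalOn F U}

/-- The classical Fatou set of a single entire function: the Fatou set of the
family of its iterates. -/
def fatouFn (f : ℂ → ℂ) : Set ℂ :=
  fatou {g | ∃ n : ℕ, 0 < n ∧ g = f^[n]}

/-- `G` is a transcendental semigroup: a nonempty set of transcendental entire
functions closed under composition. -/
def IsTransSemigroup (G : Set (ℂ → ℂ)) : Prop :=
  G.Nonempty ∧ (∀ f ∈ G, ∀ g ∈ G, f ∘ g ∈ G) ∧ ∀ f ∈ G, TranscendentalEntire f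

/-- Membership in the semigroup (under composition) generated by `S`. -/
inductive InSemigroup (S : Set (ℂ → ℂ)) : (ℂ → ℂ) → Prop
  | base {f : ℂ → ℂ} : f ∈ S → InSemigroup S f
  | comp {f g : ℂ → ℂ} : InSemigroup S f → InSemigroup S g → InSemigroup S (f ∘ g)

/-- The semigroup (under composition) generated by `S`. -/
def semigroupGen (S : Set (ℂ → ℂ)) : Set (ℂ → ℂ) := {f | InSemigroup S f}

/-- `U` is a connected component of `S`. -/
def IsComponentOf (U S : Set ℂ) : Prop := ∃ z ∈ S, U = connectedComponentIn S z

/-- A plane domain is simply connected iff its complement in the Riemann sphere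
(the one-point compactification of `ℂ`) is connected. -/
def SimplyConnectedDomain (U : Set ℂ) : Prop :=
  IsConnected ((fun z : ℂ => (z : OnePoint ℂ)) '' U)ᶜ

/-- A multiply connected domain: not simply connected. -/
def MultiplyConnectedDomain (U : Set ℂ) : Prop := ¬ SimplyConnectedDomain U

/-- A plane domain is doubly connected iff its complement in the Riemann sphere
has exactly two connected components. -/
def DoublyConnectedDomain (U : Set ℂ) : Prop :=
  ∃ x ∈ ((fun z : ℂ => (z : OnePoint ℂ)) '' U)ᶜ,
    ∃ y ∈ ((fun z : ℂ => (z : OnePoint ℂ)) '' U)ᶜ,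
      connectedComponentIn (((fun z : ℂ => (z : OnePoint ℂ)) '' U)ᶜ) x ≠
        connectedComponentIn (((fun z : ℂ => (z : OnePoint ℂ)) '' U)ᶜ) y ∧
      ∀ z ∈ ((fun z : ℂ => (z : OnePoint ℂ)) '' U)ᶜ,
        connectedComponentIn (((fun z : ℂ => (z : OnePoint ℂ)) '' U)ᶜ) z =
            connectedComponentIn (((fun z : ℂ => (z : OnePoint ℂ)) '' U)ᶜ) x ∨
          connectedComponentIn (((fun z : ℂ => (z : OnePoint ℂ)) '' U)ᶜ) z =
            connectedComponentIn (((fun z : ℂ => (z : OnePoint ℂ)) '' U)ᶜ) y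

/-- The subsemigroup `Γ̃_U` of `G`: the subsemigroup generated by those `g ∈ G`
such that the classical Fatou set `F(g)` has a multiply connected component
containing `U`. -/
def tildeGamma (G : Set (ℂ → ℂ)) (U : Set ℂ) : Set (ℂ → ℂ) :=
  semigroupGen {g | g ∈ G ∧ ∃ V, IsComponentOf V (fatouFn g) ∧
    MultiplyConnectedDomain V ∧ U ⊆ V}

/-- `w` is a critical value of `f`: the image of a point where `f'` vanishes. -/
def CriticalValue (f : ℂ → ℂ) (w : ℂ) : Prop := ∃ z, deriv f z = 0 ∧ f z = w

/-- `w` is an asymptotic value of `f`: there is a curve going to `∞` along which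
`f` tends to `w`. -/
def AsymptoticValue (f : ℂ → ℂ) (w : ℂ) : Prop :=
  ∃ γ : ℝ → ℂ, ContinuousOn γ (Ici 0) ∧
    Tendsto (fun t => ‖γ t‖) atTop atTop ∧
    Tendsto (fun t => f (γ t)) atTop (nhds w)

/-- The set `Sing(f⁻¹)` of singular values of `f`: critical values together with
asymptotic values. -/
def SingInv (f : ℂ → ℂ) : Set ℂ := {w | CriticalValue f w ∨ AsymptoticValue f w}

/-- `f` is of bounded type (class `𝔅`): transcendental entire and `Sing(f⁻¹)` is bounded. -/
def BoundedType (f : ℂ → ℂ) : Prop :=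
  TranscendentalEntire f ∧ Bornology.IsBounded (SingInv f)

/-- `f` is of finite type: transcendental entire and `Sing(f⁻¹)` is finite. -/
def FiniteType (f : ℂ → ℂ) : Prop :=
  TranscendentalEntire f ∧ (SingInv f).Finite

/-- The stabilizer `G_U` of a component `U` of `F(G)`: those `g ∈ G` for which the
component `U_g` of `F(G)` containing `g(U)` is `U` itself. -/
def stab (G : Set (ℂ → ℂ)) (U : Set ℂ) : Set (ℂ → ℂ) :=
  {g | g ∈ G ∧ ∃ z ∈ U, connectedComponentIn (fatou G) (g z) = U}

/-- `V` is a Herman ring of `g`: a periodic component of `F(g)` of some period `p`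
on which `g^[p]` is conformally conjugate to an irrational rotation of an annulus. -/
def IsHermanRingOf (g : ℂ → ℂ) (V : Set ℂ) : Prop :=
  IsComponentOf V (fatouFn g) ∧
    ∃ p : ℕ, 0 < p ∧ g^[p] '' V ⊆ V ∧
      ∃ (ψ : ℂ → ℂ) (r R α : ℝ), 0 < r ∧ r < R ∧ Irrational α ∧
        DifferentiableOn ℂ ψ V ∧ InjOn ψ V ∧
        ψ '' V = {z : ℂ | r < ‖z‖ ∧ ‖z‖ < R} ∧
        ∀ z ∈ V, ψ (g^[p] z) =
          Complex.exp (2 * Real.pi * α * Complex.I) * ψ z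

open Function Metric Bornology Complex
open scoped Real

theorem isOpen_fatou (F : Set (ℂ → ℂ)) : IsOpen (fatou F) :=
  isOpen_iff_mem_nhds.2 fun _ ⟨U, hU, hzU, hN⟩ =>
    mem_of_superset (hU.mem_nhds hzU) fun _ hz => ⟨U, hU, hz, hN⟩

theorem IsOpen.disjoint_frontier_connectedComponentIn {X : Type*} [TopologicalSpace X]
    [LocallyConnectedSpace X] {O : Set X} (hO : IsOpen O) (x : X) :
    Disjoint (frontier (connectedComponentIn O x)) O := by
  refine disjoint_left.2 fun y hy hyO => hy.2 ?_
  obtain ⟨w, hwy, hwx⟩ := mem_closure_iff.1 hy.1 _ hO.connectedComponentIn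
    (mem_connectedComponentIn hyO)
  rw [hO.connectedComponentIn.interior_eq, connectedComponentIn_eq hwx,
    ← connectedComponentIn_eq hwy]
  exact mem_connectedComponentIn hyO

theorem IsPreconnected.inter_frontier_nonempty {X : Type*} [TopologicalSpace X] {s t : Set X}
    (hs : IsPreconnected s) (ht : IsOpen t) (hst : (s ∩ t).Nonempty) (hst' : ¬ s ⊆ t) :
    (s ∩ frontier t).Nonempty := by
  by_contra! h
  have hfr : ∀ z ∈ s, z ∈ closure t → z ∈ t := fun z hz hzt => by
    by_contra hzt'
    exact h.subset ⟨hz, hzt, by rwa [ht.interior_eq]⟩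
  obtain ⟨q, hqs, hqt⟩ := not_subset.1 hst'
  obtain ⟨z, -, hzt, hzt'⟩ := hs t (closure t)ᶜ ht isClosed_closure.isOpen_compl
    (fun z hz => (em (z ∈ closure t)).imp (hfr z hz) id) hst ⟨q, hqs, mt (hfr q hqs) hqt⟩
  exact hzt' (subset_closure hzt)

theorem norm_eq_of_forall_mem_frontier_norm_eq {f : ℂ → ℂ} {W : Set ℂ} (hW : IsBounded W)
    (hf : DiffContOnCl ℂ f W) (hf0 : ∀ z ∈ closure W, f z ≠ 0) {τ : ℝ}
    (h : ∀ z ∈ frontier W, ‖f z‖ = τ) {z : ℂ} (hz : z ∈ closure W) : ‖f z‖ = τ := by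
  have hle := Complex.norm_le_of_forall_mem_frontier_norm_le hW hf (fun y hy => (h y hy).le) hz
  have hpos : 0 < ‖f z‖ := norm_pos_iff.2 (hf0 z hz)
  have hinv := Complex.norm_le_of_forall_mem_frontier_norm_le hW (hf.inv hf0) (C := τ⁻¹)
    (fun y hy => by rw [Pi.inv_apply, norm_inv, h y hy]) hz
  rw [Pi.inv_apply, norm_inv, inv_le_inv₀ hpos (hpos.trans_le hle)] at hinv
  exact hle.antisymm hinv

theorem not_subset_of_forall_mem_frontier_norm_eq {V W : Set ℂ} (hW : IsBounded W)
    {f : ℂ → ℂ} (hf : DifferentiableOn ℂ f V) (hf0 : ∀ z ∈ V, f z ≠ 0) (hWV : frontier W ⊆ V)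
    {τ : ℝ} (h : ∀ z ∈ frontier W, ‖f z‖ = τ) {z : ℂ} (hz : z ∈ W) (hzτ : ‖f z‖ ≠ τ) :
    ¬ W ⊆ V := fun hsub => by
  have hcl : closure W ⊆ V := closure_eq_self_union_frontier W ▸ union_subset hsub hWV
  exact hzτ (norm_eq_of_forall_mem_frontier_norm_eq hW ⟨hf.mono hsub, hf.continuousOn.mono hcl⟩
    (fun x hx => hf0 x (hcl hx)) h (subset_closure hz))

theorem AnalyticAt.exists_eventually_pow_eq {u : ℂ → ℂ} {z : ℂ} (hu : AnalyticAt ℂ u z)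
    (hu0 : u z ≠ 0) {k : ℕ} (hk : k ≠ 0) :
    ∃ η : ℂ → ℂ, AnalyticAt ℂ η z ∧ η z ≠ 0 ∧ ∀ᶠ x in 𝓝 z, η x ^ k = u x := by
  obtain ⟨c, hc⟩ := IsAlgClosed.exists_pow_nat_eq (u z) (Nat.pos_of_ne_zero hk)
  have hc0 : c ≠ 0 := by rintro rfl; exact hu0 (by rw [← hc, zero_pow hk])
  have hk' : (k : ℂ) ≠ 0 := by exact_mod_cast hk
  have hslit : u z / u z ∈ slitPlane := by rw [div_self hu0]; exact one_mem_slitPlane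
  have hη : AnalyticAt ℂ (fun x => c * Complex.exp (Complex.log (u x / u z) / k)) z :=
    analyticAt_const.mul ((((hu.div analyticAt_const hu0).clog hslit).div analyticAt_const
      hk').cexp)
  refine ⟨_, hη, mul_ne_zero hc0 (Complex.exp_ne_zero _), ?_⟩
  filter_upwards [hu.continuousAt.eventually_ne hu0] with x hx
  rw [mul_pow, ← Complex.exp_nat_mul, mul_div_cancel₀ _ hk',
    Complex.exp_log (div_ne_zero hx hu0), hc]
  field_simp

/-- `t` and `ζ t` have the same `k`-th power for a primitive `k`-th root of unity `ζ`. -/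
theorem not_injOn_pow_of_hasStrictDerivAt {F : ℂ → ℂ} {F' z : ℂ} (hF : HasStrictDerivAt F F' z)
    (hF' : F' ≠ 0) (hFz : F z = 0) {k : ℕ} (hk : 2 ≤ k) {N : Set ℂ} (hN : N ∈ 𝓝 z) :
    ¬ InjOn (fun x => F x ^ k) N := by
  intro hinj
  have hζ := isPrimitiveRoot_exp k (by omega)
  set ζ := exp (2 * π * I / k)
  have himg : F '' N ∈ 𝓝 0 := hFz ▸ hF.map_nhds_eq hF' ▸ image_mem_map hN
  have hζimg : ∀ᶠ t in 𝓝 (0 : ℂ), ζ * t ∈ F '' N :=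
    (continuous_const_mul ζ).tendsto' 0 0 (mul_zero ζ) himg
  obtain ⟨t, ⟨⟨x₁, hx₁, rfl⟩, ⟨x₂, hx₂, hx₂t⟩⟩, ht⟩ :=
    (((Filter.eventually_mem_set.2 himg).and hζimg).filter_mono nhdsWithin_le_nhds).and
      self_mem_nhdsWithin |>.exists (f := 𝓝[≠] (0 : ℂ))
  have hx : x₂ = x₁ := hinj hx₂ hx₁ (by simp only [hx₂t, mul_pow, hζ.pow_eq_one, one_mul])
  rw [hx] at hx₂t
  have : (ζ - 1) * F x₁ = 0 := by linear_combination -hx₂t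
  rcases mul_eq_zero.1 this with h | h
  · exact hζ.ne_one (by omega) (sub_eq_zero.1 h)
  · exact ht h

theorem deriv_ne_zero_of_injOn {V : Set ℂ} (hV : IsOpen V) {f : ℂ → ℂ}
    (hf : DifferentiableOn ℂ f V) (hinj : InjOn f V) {z : ℂ} (hz : z ∈ V) :
    deriv f z ≠ 0 := by
  intro hder
  have hfa : AnalyticAt ℂ f z := hf.analyticAt (hV.mem_nhds hz)
  have hnconst : ¬ ∀ᶠ x in 𝓝 z, f x - f z = 0 := fun h => by
    obtain ⟨x, ⟨hx, hxV⟩, hxz⟩ := ((h.and (hV.mem_nhds hz)).filter_mono nhdsWithin_le_nhds).and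
      self_mem_nhdsWithin |>.exists (f := 𝓝[≠] z)
    exact hxz (hinj hxV hz (sub_eq_zero.1 hx))
  obtain ⟨k, u, hua, hu0, hfu⟩ :=
    (hfa.sub analyticAt_const).exists_eventuallyEq_pow_smul_nonzero_iff.2 hnconst
  replace hfu : ∀ᶠ x in 𝓝 z, f x - f z = (x - z) ^ k * u x := hfu
  have hk0 : k ≠ 0 := by
    rintro rfl
    simpa [hu0.symm] using hfu.self_of_nhds
  have hk1 : k ≠ 1 := by
    rintro rfl
    have : HasDerivAt (fun x => f x - f z) (u z) z :=
      ((((hasDerivAt_id z).sub_const z).mul hua.differentiableAt.hasDerivAt)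
        |>.congr_of_eventuallyEq (hfu.mono fun x hx => by rw [hx, pow_one]; rfl)).congr_deriv
        (by simp)
    exact hu0 (by rw [← this.deriv, deriv_sub_const, hder])
  -- near `z`, `f x - f z = ((x - z) * η x) ^ k` with `k ≥ 2` and `η z ≠ 0`
  obtain ⟨η, hηa, hη0, hηu⟩ := hua.exists_eventually_pow_eq hu0 hk0
  have hF : HasDerivAt (fun x => (x - z) * η x) (η z) z :=
    (((hasDerivAt_id z).sub_const z).mul hηa.differentiableAt.hasDerivAt).congr_deriv (by simp)
  have hFs : HasStrictDerivAt (fun x => (x - z) * η x) (η z) z :=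
    hF.deriv ▸ ((analyticAt_id.sub analyticAt_const).mul hηa).hasStrictDerivAt
  refine not_injOn_pow_of_hasStrictDerivAt hFs hη0 (by simp) (k := k) (by omega)
    ((hfu.and hηu).and (hV.mem_nhds hz))
    fun x₁ ⟨⟨h₁, hη₁⟩, hx₁⟩ x₂ ⟨⟨h₂, hη₂⟩, hx₂⟩ h => hinj hx₁ hx₂ ?_
  rw [← hη₁, ← mul_pow] at h₁
  rw [← hη₂, ← mul_pow] at h₂
  simp only at h
  linear_combination h₁ - h₂ + h

theorem differentiableOn_invFunOn_image {V : Set ℂ} (hV : IsOpen V) {f : ℂ → ℂ}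
    (hf : DifferentiableOn ℂ f V) (hinj : InjOn f V) :
    DifferentiableOn ℂ (invFunOn f V) (f '' V) := by
  rintro _ ⟨z, hz, rfl⟩
  have hfz : HasStrictDerivAt f (deriv f z) z := (hf.analyticAt (hV.mem_nhds hz)).hasStrictDerivAt
  have hne := deriv_ne_zero_of_injOn hV hf hinj hz
  have hleft : ∀ x ∈ V, invFunOn f V (f x) = x := fun x hx => hinj.leftInvOn_invFunOn hx
  have himage : ∀ N ∈ 𝓝 z, f '' (N ∩ V) ∈ 𝓝 (f z) := fun N hN =>
    hfz.map_nhds_eq hne ▸ image_mem_map (inter_mem hN (hV.mem_nhds hz))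
  have hcont : ContinuousAt (invFunOn f V) (f z) := fun N hN => by
    rw [hleft z hz] at hN
    refine mem_map.2 (mem_of_superset (himage N hN) ?_)
    rintro _ ⟨x, ⟨hxN, hxV⟩, rfl⟩
    rw [mem_preimage, hleft x hxV]
    exact hxN
  have hright : ∀ᶠ y in 𝓝 (f z), f (invFunOn f V y) = y := by
    filter_upwards [himage univ univ_mem]
    rintro y ⟨x, ⟨-, hxV⟩, hxy⟩
    exact invFunOn_eq ⟨x, hxV, hxy⟩
  have hfz' : HasDerivAt f (deriv f z) (invFunOn f V (f z)) := (hleft z hz).symm ▸ hfz.hasDerivAt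
  exact (hfz'.of_local_left_inverse hcont hne hright)
    |>.differentiableAt.differentiableWithinAt

def annulus (r R : ℝ) : Set ℂ := {z | r < ‖z‖ ∧ ‖z‖ < R}

theorem isOpen_annulus (r R : ℝ) : IsOpen (annulus r R) :=
  (isOpen_lt continuous_const continuous_norm).inter (isOpen_lt continuous_norm continuous_const)

theorem sphere_subset_annulus {r R τ : ℝ} (hr : r < τ) (hR : τ < R) :
    sphere (0 : ℂ) τ ⊆ annulus r R := fun w hw => by
  rw [mem_sphere_zero_iff_norm] at hw
  exact ⟨hw ▸ hr, hw ▸ hR⟩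

/-- `2πi` times the winding number of the loop `θ ↦ σ (τ e^{iθ})` around `z`. -/
def windingIntegral (σ : ℂ → ℂ) (τ : ℝ) (z : ℂ) : ℂ :=
  ∮ w in C(0, τ), deriv σ w / (σ w - z)

section windingIntegral

variable {σ : ℂ → ℂ} {A : Set ℂ} {τ : ℝ}

theorem circleIntegrable_deriv_div_sub (hA : IsOpen A) (hσ : DifferentiableOn ℂ σ A)
    (hτ : 0 ≤ τ) (hsub : sphere (0 : ℂ) τ ⊆ A) {z : ℂ} (hz : z ∉ σ '' sphere 0 τ) :
    CircleIntegrable (fun w => deriv σ w / (σ w - z)) 0 τ :=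
  ContinuousOn.circleIntegrable hτ <|
    ((hσ.analyticOnNhd hA).deriv.continuousOn.mono hsub).div
      ((hσ.continuousOn.mono hsub).sub continuousOn_const)
      fun w hw h => hz ⟨w, hw, sub_eq_zero.1 h⟩

/-- Locally, `log ((σ w - z) / (σ w - z₀))` is a primitive of the difference of the integrands. -/
theorem windingIntegral_eq_of_norm_sub_lt (hA : IsOpen A) (hσ : DifferentiableOn ℂ σ A)
    (hτ : 0 ≤ τ) (hsub : sphere (0 : ℂ) τ ⊆ A) {z z₀ : ℂ}
    (h : ∀ w ∈ sphere (0 : ℂ) τ, ‖z - z₀‖ < ‖σ w - z₀‖) :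
    windingIntegral σ τ z = windingIntegral σ τ z₀ := by
  have hne : ∀ w ∈ sphere (0 : ℂ) τ, σ w - z₀ ≠ 0 := fun w hw =>
    norm_pos_iff.1 ((norm_nonneg _).trans_lt (h w hw))
  have hne' : ∀ w ∈ sphere (0 : ℂ) τ, σ w - z ≠ 0 := fun w hw => by
    have := norm_sub_norm_le (σ w - z₀) (z - z₀)
    rw [sub_sub_sub_cancel_right] at this
    exact norm_pos_iff.1 (by linarith [h w hw])
  rw [windingIntegral, windingIntegral, ← sub_eq_zero, ← circleIntegral.integral_sub
    (circleIntegrable_deriv_div_sub hA hσ hτ hsub fun ⟨w, hw, e⟩ => hne' w hw (sub_eq_zero.2 e))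
    (circleIntegrable_deriv_div_sub hA hσ hτ hsub fun ⟨w, hw, e⟩ => hne w hw (sub_eq_zero.2 e))]
  refine circleIntegral.integral_eq_zero_of_hasDerivWithinAt
    (f := fun w => log ((σ w - z) / (σ w - z₀))) hτ fun w hw => ?_
  have hσw : HasDerivAt σ (deriv σ w) w :=
    (hσ.differentiableAt (hA.mem_nhds (hsub hw))).hasDerivAt
  have hslit : (σ w - z) / (σ w - z₀) ∈ slitPlane := by
    have : (σ w - z) / (σ w - z₀) = 1 + -((z - z₀) / (σ w - z₀)) := by
      field_simp [hne w hw]; ring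
    rw [this]
    refine mem_slitPlane_of_norm_lt_one ?_
    rw [norm_neg, norm_div, div_lt_one (norm_pos_iff.2 (hne w hw))]
    exact h w hw
  have hquot : HasDerivAt (fun w => (σ w - z) / (σ w - z₀))
      (deriv σ w * (z - z₀) / (σ w - z₀) ^ 2) w :=
    ((hσw.sub_const z).div (hσw.sub_const z₀) (hne w hw)).congr_deriv (by ring)
  refine (hquot.clog hslit).hasDerivWithinAt.congr_deriv ?_
  field_simp [hne w hw, hne' w hw]
  ring

theorem windingIntegral_eq_of_mem_connectedComponentIn (hA : IsOpen A)
    (hσ : DifferentiableOn ℂ σ A) (hτ : 0 ≤ τ) (hsub : sphere (0 : ℂ) τ ⊆ A) {z z₀ : ℂ}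
    (hz : z ∈ connectedComponentIn (σ '' sphere 0 τ)ᶜ z₀) :
    windingIntegral σ τ z = windingIntegral σ τ z₀ := by
  have hK : IsClosed (σ '' sphere 0 τ) :=
    ((isCompact_sphere 0 τ).image_of_continuousOn (hσ.continuousOn.mono hsub)).isClosed
  have hloc : ∀ y ∈ (σ '' sphere 0 τ)ᶜ, HasDerivAt (windingIntegral σ τ) 0 y := by
    intro y hy
    obtain ⟨ε, hε, hball⟩ := Metric.isOpen_iff.1 hK.isOpen_compl y hy
    refine (hasDerivAt_const y (windingIntegral σ τ y)).congr_of_eventuallyEq ?_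
    filter_upwards [ball_mem_nhds y hε] with x hx
    refine windingIntegral_eq_of_norm_sub_lt hA hσ hτ hsub fun w hw => ?_
    rw [← dist_eq_norm, ← dist_eq_norm]
    exact hx.trans_le (not_lt.1 fun h => hball h ⟨w, hw, rfl⟩)
  have hz₀ : z₀ ∈ (σ '' sphere 0 τ)ᶜ := connectedComponentIn_nonempty_iff.1 ⟨z, hz⟩
  exact hK.isOpen_compl.connectedComponentIn.is_const_of_deriv_eq_zero
    isPreconnected_connectedComponentIn
    (fun y hy =>
      (hloc y (connectedComponentIn_subset _ _ hy)).differentiableAt.differentiableWithinAt)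
    (fun y hy => (hloc y (connectedComponentIn_subset _ _ hy)).deriv) hz
    (mem_connectedComponentIn hz₀)

theorem tendsto_windingIntegral_cobounded (hA : IsOpen A) (hσ : DifferentiableOn ℂ σ A)
    (hτ : 0 ≤ τ) (hsub : sphere (0 : ℂ) τ ⊆ A) :
    Tendsto (windingIntegral σ τ) (cobounded ℂ) (𝓝 0) := by
  obtain ⟨M, hM⟩ := (isCompact_sphere (0 : ℂ) τ).exists_bound_of_continuousOn
    ((hσ.analyticOnNhd hA).deriv.continuousOn.mono hsub)
  obtain ⟨B, hB⟩ := (isCompact_sphere (0 : ℂ) τ).exists_bound_of_continuousOn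
    (hσ.continuousOn.mono hsub)
  have hdist : Tendsto (fun z : ℂ => ‖z‖ - B) (cobounded ℂ) atTop :=
    tendsto_atTop_add_const_right _ _ tendsto_norm_cobounded_atTop
  refine squeeze_zero_norm' ?_ ((tendsto_const_nhds (x := 2 * π * τ * M)).div_atTop hdist)
  filter_upwards [hdist.eventually_gt_atTop 0] with z hz
  rw [mul_div_assoc]
  refine circleIntegral.norm_integral_le_of_norm_le_const hτ fun w hw => ?_
  rw [norm_div]
  refine div_le_div₀ ((norm_nonneg _).trans (hM w hw)) (hM w hw) hz ?_
  linarith [hB w hw, norm_sub_norm_le z (σ w), norm_sub_rev z (σ w)]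

theorem windingIntegral_eq_zero_of_not_isBounded (hA : IsOpen A)
    (hσ : DifferentiableOn ℂ σ A) (hτ : 0 ≤ τ) (hsub : sphere (0 : ℂ) τ ⊆ A) {z₀ : ℂ}
    (hunb : ¬ IsBounded (connectedComponentIn (σ '' sphere 0 τ)ᶜ z₀)) :
    windingIntegral σ τ z₀ = 0 := by
  have hfreq : ∃ᶠ z in cobounded ℂ, z ∈ connectedComponentIn (σ '' sphere 0 τ)ᶜ z₀ :=
    fun h => hunb (isBounded_def.2 h)
  refine tendsto_nhds_unique_of_frequently_eq tendsto_const_nhds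
    (tendsto_windingIntegral_cobounded hA hσ hτ hsub) ?_
  exact hfreq.mono fun z hz =>
    (windingIntegral_eq_of_mem_connectedComponentIn hA hσ hτ hsub hz).symm

theorem circleIntegral_sub_inv_eq_zero_of_lt_norm {c w : ℂ} {R : ℝ} (hR : 0 ≤ R)
    (hw : R < ‖w - c‖) : (∮ z in C(c, R), (z - w)⁻¹) = 0 := by
  have hne : ∀ z ∈ closedBall c R, z - w ≠ 0 := fun z hz h => by
    rw [mem_closedBall, sub_eq_zero.1 h, dist_eq_norm] at hz
    linarith
  exact circleIntegral_eq_zero_of_differentiable_on_off_countable hR countable_empty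
    ((continuousOn_id.sub continuousOn_const).inv₀ hne) fun z hz =>
      (differentiableAt_id.sub_const w).inv (hne z (ball_subset_closedBall hz.1))

/-- Writing `σ x - σ w₀ = (x - w₀) d x` splits off the pole of the integrand at `w₀`. -/
theorem deriv_div_sub_eq_inv_add {w w₀ : ℂ} (hσ : DifferentiableAt ℂ σ w) (hne : w ≠ w₀)
    (hσw : σ w ≠ σ w₀) :
    deriv σ w / (σ w - σ w₀) = (w - w₀)⁻¹ + deriv (dslope σ w₀) w / dslope σ w₀ w := by
  have hσd : ∀ x, σ x = σ w₀ + (x - w₀) * dslope σ w₀ x := fun x => by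
    rw [← smul_eq_mul, sub_smul_dslope, add_sub_cancel]
  have hdw : dslope σ w₀ w ≠ 0 := fun h => hσw (by rw [hσd w, h, mul_zero, add_zero])
  have hderiv : HasDerivAt σ (dslope σ w₀ w + (w - w₀) * deriv (dslope σ w₀) w) w := by
    refine ((((hasDerivAt_id w).sub_const w₀).mul
      ((differentiableAt_dslope_of_ne hne).2 hσ).hasDerivAt).const_add (σ w₀)
      |>.congr_of_eventuallyEq (.of_forall hσd)).congr_deriv ?_
    simp
  rw [hderiv.deriv, hσd w, add_sub_cancel_left]
  field_simp [sub_ne_zero.2 hne, hdw]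

theorem dslope_ne_zero_of_injOn (hA : IsOpen A) (hσ : DifferentiableOn ℂ σ A) (hinj : InjOn σ A)
    {w₀ w : ℂ} (hw₀ : w₀ ∈ A) (hw : w ∈ A) : dslope σ w₀ w ≠ 0 := by
  rcases eq_or_ne w w₀ with rfl | hne
  · rw [dslope_same]
    exact deriv_ne_zero_of_injOn hA hσ hinj hw
  · rw [dslope_of_ne σ hne, slope_def_field]
    exact div_ne_zero (sub_ne_zero.2 fun h => hne (hinj hw hw₀ h)) (sub_ne_zero.2 hne)

/-- The argument principle for the simple zero of `σ - σ w₀` between the two circles. -/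
theorem windingIntegral_sub_windingIntegral_of_injOn {r R : ℝ} (hr : 0 ≤ r)
    (hσ : DifferentiableOn ℂ σ (annulus r R)) (hinj : InjOn σ (annulus r R)) {ρ₁ ρ₃ : ℝ}
    (h₁ : r < ρ₁) (h₃ : ρ₃ < R) {w₀ : ℂ} (hw₁ : ρ₁ < ‖w₀‖) (hw₃ : ‖w₀‖ < ρ₃) :
    windingIntegral σ ρ₃ (σ w₀) - windingIntegral σ ρ₁ (σ w₀) = 2 * π * I := by
  have hA := isOpen_annulus r R
  have hw₀ : w₀ ∈ annulus r R := ⟨h₁.trans hw₁, hw₃.trans h₃⟩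
  set d := dslope σ w₀
  have hd : DifferentiableOn ℂ d (annulus r R) :=
    (differentiableOn_dslope (hA.mem_nhds hw₀)).2 hσ
  have hd0 : ∀ w ∈ annulus r R, d w ≠ 0 := fun w hw => dslope_ne_zero_of_injOn hA hσ hinj hw₀ hw
  set E := fun w => deriv d w / d w
  have hEd : DifferentiableOn ℂ E (annulus r R) :=
    (hd.analyticOnNhd hA).deriv.differentiableOn.div hd hd0
  have hint : ∀ ρ, r < ρ → ρ < R → ρ ≠ ‖w₀‖ →
      windingIntegral σ ρ (σ w₀) = (∮ w in C(0, ρ), (w - w₀)⁻¹) + ∮ w in C(0, ρ), E w := by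
    intro ρ hrρ hρR hρw
    have hρ : 0 ≤ ρ := hr.trans hrρ.le
    have hne : ∀ w ∈ sphere (0 : ℂ) ρ, w ≠ w₀ := fun w hw h =>
      hρw (by rw [← h, mem_sphere_zero_iff_norm.1 hw])
    have hinv : CircleIntegrable (fun w => (w - w₀)⁻¹) 0 ρ :=
      ((continuousOn_id.sub continuousOn_const).inv₀ fun w hw =>
        sub_ne_zero.2 (hne w hw)).circleIntegrable hρ
    rw [windingIntegral, ← circleIntegral.integral_add hinv
      ((hEd.continuousOn.mono (sphere_subset_annulus hrρ hρR)).circleIntegrable hρ)]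
    refine circleIntegral.integral_congr hρ fun w hw => ?_
    have hwA := sphere_subset_annulus hrρ hρR hw
    exact deriv_div_sub_eq_inv_add (hσ.differentiableAt (hA.mem_nhds hwA)) (hne w hw)
      fun h => hne w hw (hinj hwA hw₀ h)
  have hann : closedBall (0 : ℂ) ρ₃ \ ball 0 ρ₁ ⊆ annulus r R := fun w ⟨hw₃', hw₁'⟩ => by
    rw [mem_closedBall_zero_iff] at hw₃'
    rw [mem_ball_zero_iff, not_lt] at hw₁'
    exact ⟨h₁.trans_le hw₁', hw₃'.trans_lt h₃⟩
  have hE : (∮ w in C(0, ρ₃), E w) = ∮ w in C(0, ρ₁), E w :=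
    circleIntegral_eq_of_differentiable_on_annulus_off_countable (hr.trans_lt h₁)
      (hw₁.trans hw₃).le countable_empty (hEd.continuousOn.mono hann) fun w hw =>
        hEd.differentiableAt (hA.mem_nhds (hann ⟨ball_subset_closedBall hw.1.1,
          fun h => hw.1.2 (ball_subset_closedBall h)⟩))
  rw [hint ρ₃ (h₁.trans (hw₁.trans hw₃)) h₃ hw₃.ne', hint ρ₁ h₁ ((hw₁.trans hw₃).trans h₃)
    hw₁.ne, hE, circleIntegral.integral_sub_inv_of_mem_ball (mem_ball_zero_iff.2 hw₃),
    circleIntegral_sub_inv_eq_zero_of_lt_norm (hr.trans h₁.le) (by rwa [sub_zero])]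
  ring

/-- Otherwise both winding integrals around `σ w₀` vanish, contradicting the argument
principle. -/
theorem exists_isBounded_connectedComponentIn_compl_image_sphere {r R : ℝ} (hr : 0 ≤ r)
    (hσ : DifferentiableOn ℂ σ (annulus r R)) (hinj : InjOn σ (annulus r R)) {w₀ : ℂ}
    (hw₀ : w₀ ∈ annulus r R) :
    ∃ τ, r < τ ∧ τ < R ∧ τ ≠ ‖w₀‖ ∧
      IsBounded (connectedComponentIn (σ '' sphere 0 τ)ᶜ (σ w₀)) := by
  obtain ⟨hrw, hwR⟩ := hw₀
  by_contra! hunb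
  have hzero : ∀ τ, r < τ → τ < R → τ ≠ ‖w₀‖ → windingIntegral σ τ (σ w₀) = 0 :=
    fun τ hrτ hτR hτw => windingIntegral_eq_zero_of_not_isBounded (isOpen_annulus r R) hσ
      (hr.trans hrτ.le) (sphere_subset_annulus hrτ hτR) (hunb τ hrτ hτR hτw)
  have h₁ : r < (r + ‖w₀‖) / 2 := by linarith
  have h₃ : (‖w₀‖ + R) / 2 < R := by linarith
  have := windingIntegral_sub_windingIntegral_of_injOn hr hσ hinj h₁ h₃
    (by linarith : (r + ‖w₀‖) / 2 < ‖w₀‖) (by linarith : ‖w₀‖ < (‖w₀‖ + R) / 2)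
  rw [hzero _ (by linarith) h₃ (by linarith), hzero _ h₁ (by linarith) (by linarith),
    sub_zero] at this
  exact two_pi_I_ne_zero this.symm

end windingIntegral

theorem exists_strictMono_mod_eq (m : ℕ → ℕ) {p : ℕ} (hp : 0 < p) :
    ∃ j, ∃ φ : ℕ → ℕ, StrictMono φ ∧ ∀ k, m (φ k) % p = j := by
  obtain ⟨⟨j, _⟩, hj⟩ := Finite.exists_infinite_fiber
    fun k => (⟨m k % p, Nat.mod_lt _ hp⟩ : Iio p)
  refine ⟨j, extraction_of_frequently_atTop (P := fun k => m k % p = j)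
    (Nat.frequently_atTop_iff_infinite.2 ?_)⟩
  simpa [Set.infinite_coe_iff, preimage, Subtype.ext_iff] using hj

theorem UniformCauchySeqOn.exists_tendstoUniformlyOn {α β : Type*} [UniformSpace β]
    [CompleteSpace β] {F : ℕ → α → β} {s : Set α} (hF : UniformCauchySeqOn F atTop s) :
    ∃ f, TendstoUniformlyOn F f atTop s := by
  choose f hf using fun x : s => cauchySeq_tendsto_of_complete (hF.cauchySeq x.2)
  classical
  exact ⟨fun x => if hx : x ∈ s then f ⟨x, hx⟩ else F 0 x, hF.tendstoUniformlyOn_of_tendsto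
    fun x hx => by simpa [hx] using hf ⟨x, hx⟩⟩

/-- The maximum modulus principle, applied to the differences `u m - u n`. -/
theorem UniformCauchySeqOn.closure_of_frontier {W : Set ℂ} (hW : IsBounded W)
    {u : ℕ → ℂ → ℂ} (hu : ∀ n, Differentiable ℂ (u n))
    (h : UniformCauchySeqOn u atTop (frontier W)) : UniformCauchySeqOn u atTop (closure W) := by
  rw [Metric.uniformCauchySeqOn_iff] at h ⊢
  intro ε hε
  obtain ⟨N, hN⟩ := h (ε / 2) (half_pos hε)
  refine ⟨N, fun m hm n hn x hx => ?_⟩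
  rw [dist_eq_norm]
  refine (Complex.norm_le_of_forall_mem_frontier_norm_le hW ((hu m).sub (hu n)).diffContOnCl
    (fun y hy => ?_) hx).trans_lt (half_lt_self hε)
  rw [Pi.sub_apply, ← dist_eq_norm]
  exact (hN m hm n hn y hy).le

theorem tendstoUniformlyOn_comp_mul {Φ : ℂ → ℂ} {τ : ℝ} (hΦ : ContinuousOn Φ (sphere 0 τ))
    {S : Set ℂ} {ψ : ℂ → ℂ} (hψ : MapsTo ψ S (sphere 0 τ)) {c : ℕ → ℂ} {c₀ : ℂ}
    (hc : ∀ n, c n ∈ sphere (0 : ℂ) 1) (hc₀ : Tendsto c atTop (𝓝 c₀)) :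
    TendstoUniformlyOn (fun n x => Φ (c n * ψ x)) (fun x => Φ (c₀ * ψ x)) atTop S := by
  have hmul : ∀ a ∈ sphere (0 : ℂ) 1, ∀ x ∈ S, a * ψ x ∈ sphere 0 τ := fun a ha x hx => by
    rw [mem_sphere_zero_iff_norm] at ha ⊢
    rw [norm_mul, ha, one_mul, mem_sphere_zero_iff_norm.1 (hψ hx)]
  refine ((isCompact_sphere 0 τ).uniformContinuousOn_of_continuous hΦ)
    |>.comp_tendstoUniformlyOn_eventually (.of_forall fun n x hx => hmul _ (hc n) x hx)
    (fun x hx => hmul _ (isClosed_sphere.mem_of_tendsto hc₀ (.of_forall hc)) x hx) ?_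
  rw [Metric.tendstoUniformlyOn_iff]
  intro ε hε
  filter_upwards [Metric.tendsto_nhds.1 hc₀ (ε / (|τ| + 1)) (by positivity)] with n hn x hx
  have hτ : 0 ≤ τ := (norm_nonneg _).trans_eq (mem_sphere_zero_iff_norm.1 (hψ hx))
  rw [abs_of_nonneg hτ] at hn
  rw [dist_eq_norm, ← sub_mul, norm_mul, mem_sphere_zero_iff_norm.1 (hψ hx), ← dist_eq_norm,
    dist_comm]
  calc dist (c n) c₀ * τ ≤ ε / (τ + 1) * τ := by gcongr
    _ < ε := by
        rw [div_mul_eq_mul_div, div_lt_iff₀ (by positivity)]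
        linarith

/-- Normality by the maximum principle: along a subsequence of the iterates the rotation
numbers converge, so the iterates converge uniformly on `frontier W`, hence on `closure W`. -/
theorem normalOn_iterate_of_frontier_rotation {g : ℂ → ℂ} (hg : Differentiable ℂ g) {p : ℕ}
    (hp : 0 < p) {W : Set ℂ} (hW : IsBounded W) {σ ψ : ℂ → ℂ} {τ : ℝ} {c : ℂ} (hc : ‖c‖ = 1)
    (hσ : ContinuousOn σ (sphere 0 τ)) (hψ : MapsTo ψ (frontier W) (sphere 0 τ))
    (hrep : ∀ n, ∀ x ∈ frontier W, g^[p * n] x = σ (c ^ n * ψ x)) :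
    NormalOn {f | ∃ n, 0 < n ∧ f = g^[n]} W := by
  intro s hs
  choose m _ hm using hs
  obtain ⟨j, φ₁, hφ₁, hj⟩ := exists_strictMono_mod_eq m hp
  have hsj : ∀ k, s (φ₁ k) = g^[j] ∘ g^[p * (m (φ₁ k) / p)] := fun k => by
    rw [hm, ← iterate_add, ← hj k, Nat.mod_add_div]
  obtain ⟨c₀, -, φ₂, hφ₂, hc₀⟩ := (isCompact_sphere (0 : ℂ) 1).tendsto_subseq
    (x := fun k => c ^ (m (φ₁ k) / p)) fun k => by simp [hc]
  have hfr : UniformCauchySeqOn (fun k => s (φ₁ (φ₂ k))) atTop (frontier W) := by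
    refine (tendstoUniformlyOn_comp_mul ((hg.iterate j).continuous.comp_continuousOn hσ) hψ
      (fun k => by simp [hc]) hc₀ |>.congr (.of_forall fun k x hx => ?_)).uniformCauchySeqOn
    simp only [hsj, comp_apply, hrep _ x hx]
  obtain ⟨F, hF⟩ := (hfr.closure_of_frontier hW fun k => by
    rw [hm]; exact hg.iterate _).exists_tendstoUniformlyOn
  exact ⟨φ₁ ∘ φ₂, hφ₁.comp hφ₂, Or.inl ⟨F, hF.tendstoLocallyUniformlyOn.mono subset_closure⟩⟩

theorem apply_iterate_eq_pow_mul {α M : Type*} [Monoid M] {h : α → α} {ψ : α → M} {V : Set α}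
    (hV : MapsTo h V V) {c : M} (hconj : ∀ z ∈ V, ψ (h z) = c * ψ z) (n : ℕ) {z : α}
    (hz : z ∈ V) : ψ (h^[n] z) = c ^ n * ψ z := by
  induction n with
  | zero => simp
  | succ n ih => rw [iterate_succ_apply', hconj _ (hV.iterate n hz), ih, pow_succ', mul_assoc]

/-- `W` is the bounded complementary component of a level curve `|ψ| = τ` that encloses a point
of `V` where `|ψ| ≠ τ`. -/
theorem exists_isBounded_inter_frontier_nonempty_of_image_eq_annulus {V : Set ℂ} (hV : IsOpen V)
    {ψ : ℂ → ℂ} (hψ : DifferentiableOn ℂ ψ V) (hinj : InjOn ψ V) {r R : ℝ} (hr : 0 ≤ r)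
    (hrR : r < R) (himg : ψ '' V = annulus r R) :
    ∃ (W : Set ℂ) (τ : ℝ), IsOpen W ∧ IsBounded W ∧ frontier W ⊆ V ∧
      MapsTo ψ (frontier W) (sphere 0 τ) ∧ ContinuousOn (invFunOn ψ V) (sphere 0 τ) ∧
      (W ∩ frontier V).Nonempty := by
  set σ := invFunOn ψ V
  have hsurj : SurjOn ψ V (annulus r R) := himg ▸ surjOn_image ψ V
  have hσ : DifferentiableOn ℂ σ (annulus r R) := himg ▸ differentiableOn_invFunOn_image hV hψ hinj
  have hψσ : LeftInvOn ψ σ (annulus r R) := hsurj.rightInvOn_invFunOn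
  set w₀ : ℂ := (((r + R) / 2 : ℝ) : ℂ)
  have hw₀ : w₀ ∈ annulus r R := by
    constructor <;> rw [norm_real, Real.norm_of_nonneg (by linarith)] <;> linarith
  obtain ⟨τ, hrτ, hτR, hτw₀, hbdd⟩ :=
    exists_isBounded_connectedComponentIn_compl_image_sphere hr hσ hψσ.injOn hw₀
  have hsph := sphere_subset_annulus hrτ hτR
  set C := σ '' sphere 0 τ
  have hCV : C ⊆ V := (hsurj.mapsTo_invFunOn.mono_left hsph).image_subset
  have hψC : MapsTo ψ C (sphere 0 τ) := by
    rintro _ ⟨w, hw, rfl⟩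
    rwa [hψσ (hsph hw)]
  have hC : IsClosed C :=
    ((isCompact_sphere 0 τ).image_of_continuousOn (hσ.continuousOn.mono hsph)).isClosed
  have hw₀C : σ w₀ ∉ C := by
    rintro ⟨w, hw, hσw⟩
    rw [hψσ.injOn (hsph hw) hw₀ hσw, mem_sphere_zero_iff_norm] at hw
    exact hτw₀ hw.symm
  set W := connectedComponentIn Cᶜ (σ w₀)
  have hWfr : frontier W ⊆ C := fun z hz => by_contra fun hzC =>
    disjoint_left.1 (hC.isOpen_compl.disjoint_frontier_connectedComponentIn (σ w₀)) hz hzC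
  have hψ0 : ∀ z ∈ V, ψ z ≠ 0 := fun z hz h0 => by
    have := (himg ▸ mem_image_of_mem ψ hz : ψ z ∈ annulus r R).1
    rw [h0, norm_zero] at this
    linarith
  have hWV : ¬ W ⊆ V := not_subset_of_forall_mem_frontier_norm_eq hbdd hψ hψ0 (hWfr.trans hCV)
    (fun z hz => mem_sphere_zero_iff_norm.1 (hψC (hWfr hz))) (mem_connectedComponentIn hw₀C)
    (by rw [hψσ hw₀]; exact hτw₀.symm)
  exact ⟨W, τ, hC.isOpen_compl.connectedComponentIn, hbdd, hWfr.trans hCV, hψC.mono_left hWfr,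
    hσ.continuousOn.mono hsph, isPreconnected_connectedComponentIn.inter_frontier_nonempty hV
      ⟨σ w₀, mem_connectedComponentIn hw₀C, hsurj.mapsTo_invFunOn hw₀⟩ hWV⟩

theorem not_isHermanRingOf {g : ℂ → ℂ} (hg : Differentiable ℂ g) (V : Set ℂ) :
    ¬ IsHermanRingOf g V := by
  rintro ⟨⟨z₀, -, rfl⟩, p, hp, hgV, ψ, r, R, α, hr, hrR, -, hψ, hinj, himg, hconj⟩
  have hF := isOpen_fatou {f | ∃ n, 0 < n ∧ f = g^[n]}
  obtain ⟨W, τ, hW, hWb, hWV, hψW, hσ, z, hzW, hzV⟩ :=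
    exists_isBounded_inter_frontier_nonempty_of_image_eq_annulus hF.connectedComponentIn hψ
      hinj hr.le hrR himg
  have hc : ‖Complex.exp (2 * π * α * I)‖ = 1 := mod_cast norm_exp_ofReal_mul_I (2 * π * α)
  have hrep : ∀ n, ∀ x ∈ frontier W,
      g^[p * n] x = invFunOn ψ _ (Complex.exp (2 * π * α * I) ^ n * ψ x) := fun n x hx => by
    have hmaps : MapsTo g^[p] _ _ := fun z hz => hgV (mem_image_of_mem _ hz)
    rw [← apply_iterate_eq_pow_mul hmaps hconj n (hWV hx), iterate_mul,
      hinj.leftInvOn_invFunOn (hmaps.iterate n (hWV hx))]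
  exact disjoint_left.1 (hF.disjoint_frontier_connectedComponentIn z₀) hzV
    ⟨W, hW, hzW, normalOn_iterate_of_frontier_rotation hg hp hWb hc hσ hψW hrep⟩

/-- `F(G)` contains no Herman rings: no component `U` of `F(G)` with
`g(U) ⊆ U` for some `g ∈ G` is contained in a Herman ring of `g`. -/
theorem stmt5 (G : Set (ℂ → ℂ)) (hG : IsTransSemigroup G) :
    ¬ ∃ (U : Set ℂ) (g : ℂ → ℂ), IsComponentOf U (fatou G) ∧ g ∈ G ∧
      g '' U ⊆ U ∧ ∃ V, IsHermanRingOf g V ∧ U ⊆ V := by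
  rintro ⟨U, g, -, hgG, -, V, hV, -⟩
  exact not_isHermanRingOf (hG.2.2 g hgG).1 V hV
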